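/- Let k and m be positive integers and let n = mk. Then ∑_{π ∈ MP_{n,1}^k} sgn(π) · t^{exc(π)} = (1 - t)^{n-k} as polynomials in ℚ[t]. -/

import Mathlib

open Polynomial Finset

/-- Number of excedances of a permutation of `Fin n` (indices where `π i > i`). -/
def exc {n : ℕ} (π : Equiv.Perm (Fin n)) : ℕ :=
  (Finset.univ.filter fun i => π i > i).card

/-- Mod-k-alternating permutations of size `n` starting with remainder `r` (mod k):
permutations with `π i - i ≡ r - 1 (mod k)` for all `i`. -/
def MP (n k r : ℕ) : Finset (Equiv.Perm (Fin n)) :=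
  Finset.univ.filter fun π => ∀ i : Fin n, ((π i : ℤ) - (i : ℤ)) ≡ ((r : ℤ) - 1) [ZMOD (k : ℤ)]

/-!
The sum is the Leibniz expansion of the determinant of the matrix whose `(i, j)` entry is `0`
unless `i ≡ j (mod k)`, and otherwise `t` below the diagonal and `1` on and above it: the
congruence kills every permutation outside `MP n k 1`, and the product of the surviving entries
along `π` is `t ^ exc π`. Grouping the indices by residue mod `k` makes this matrix block diagonal
with `k` copies of the `m × m` matrix with `t` below the diagonal and `1` elsewhere, whose
determinant is `(1 - t) ^ (m - 1)`.
-/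

variable {R : Type*} [CommRing R]

def excMatrix (n : ℕ) (a : R) : Matrix (Fin n) (Fin n) R :=
  Matrix.of fun i j => if j < i then a else 1

def modExcMatrix (n k : ℕ) (a : R) : Matrix (Fin n) (Fin n) R :=
  Matrix.of fun i j => if (j : ℕ) ≡ i [MOD k] then excMatrix n a i j else 0

theorem prod_excMatrix_apply {n : ℕ} (a : R) (π : Equiv.Perm (Fin n)) :
    ∏ i, excMatrix n a (π i) i = a ^ exc π := by
  simp only [excMatrix, Matrix.of_apply, prod_ite, prod_const, one_pow, mul_one]
  rfl

-- Subtracting row 1 from row 0 leaves `(1 - a, 0, …, 0)` on top of `excMatrix (m + 1) a`.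
theorem det_excMatrix (a : R) : ∀ m : ℕ, (excMatrix m a).det = (1 - a) ^ (m - 1)
  | 0 => by simp
  | 1 => by simp [excMatrix]
  | m + 2 => by
    set L := excMatrix (m + 2) a
    have hrow : L 0 + (-1 : R) • L 1 = Pi.single 0 (1 - a) := by
      ext j
      rcases eq_or_ne j 0 with rfl | hj
      · simp [L, excMatrix, sub_eq_add_neg]
      · have : (1 : Fin (m + 2)) ≤ j := Fin.one_le_of_ne_zero hj
        simp [L, excMatrix, hj, not_lt.2 this]
    have hminor : (L.updateRow 0 (Pi.single 0 (1 - a))).submatrix Fin.succ Fin.succ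
        = excMatrix (m + 1) a := by
      ext i j
      simp [L, excMatrix]
    rw [← Matrix.det_updateRow_add_smul_self L (i := 0) (j := 1) (by simp) (-1), hrow,
      Matrix.det_succ_row_zero, Fin.sum_univ_succ, Fintype.sum_eq_zero]
    · simp only [Matrix.updateRow_self, Pi.single_eq_same, Fin.succAbove_zero, hminor,
        det_excMatrix a (m + 1), Fin.val_zero, pow_zero, one_mul, add_zero, Nat.add_sub_cancel]
      rw [show m + 2 - 1 = m + 1 from rfl, pow_succ']
    · intro j
      simp [Fin.succ_ne_zero]

theorem mem_MP_one_iff {n k : ℕ} {π : Equiv.Perm (Fin n)} :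
    π ∈ MP n k 1 ↔ ∀ i : Fin n, (i : ℕ) ≡ π i [MOD k] := by
  simp [MP, Nat.modEq_iff_dvd, Int.modEq_zero_iff_dvd]

theorem det_modExcMatrix_eq_sum (n k : ℕ) (a : R) :
    (modExcMatrix n k a).det = ∑ π ∈ MP n k 1, ((Equiv.Perm.sign π : ℤ) : R) * a ^ exc π := by
  rw [Matrix.det_apply', ← sum_subset (subset_univ (MP n k 1))]
  · refine sum_congr rfl fun π hπ => ?_
    rw [← prod_excMatrix_apply]
    congr 1
    refine prod_congr rfl fun i _ => ?_
    simp [modExcMatrix, mem_MP_one_iff.1 hπ i]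
  · intro π _ hπ
    obtain ⟨i, hi⟩ : ∃ i : Fin n, ¬ (i : ℕ) ≡ π i [MOD k] := by simpa [mem_MP_one_iff] using hπ
    rw [prod_eq_zero (mem_univ i) (by simp [modExcMatrix, hi]), mul_zero]

theorem modExcMatrix_submatrix_finProdFinEquiv (m k : ℕ) (a : R) :
    (modExcMatrix (m * k) k a).submatrix finProdFinEquiv finProdFinEquiv
      = Matrix.blockDiagonal fun _ => excMatrix m a := by
  ext ⟨i, c⟩ ⟨j, d⟩
  rcases eq_or_ne d c with rfl | hdc
  · have hlt : finProdFinEquiv (j, d) < finProdFinEquiv (i, d) ↔ j < i := by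
      rw [Fin.lt_def, Fin.lt_def]
      simp [d.pos]
    simp [modExcMatrix, excMatrix, Matrix.blockDiagonal_apply, hlt]
  · have hmod : ¬ d.val + k * j ≡ c.val + k * i [MOD k] := by
      simpa [Nat.ModEq, Nat.mod_eq_of_lt c.isLt, Nat.mod_eq_of_lt d.isLt, Fin.ext_iff] using hdc
    simp [modExcMatrix, Matrix.blockDiagonal_apply, hmod, hdc.symm]

theorem det_modExcMatrix_mul (m k : ℕ) (a : R) :
    (modExcMatrix (m * k) k a).det = (1 - a) ^ ((m - 1) * k) := by
  rw [← Matrix.det_submatrix_equiv_self finProdFinEquiv, modExcMatrix_submatrix_finProdFinEquiv,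
    Matrix.det_blockDiagonal, prod_const, det_excMatrix, card_univ, Fintype.card_fin, ← pow_mul]

theorem stmt1_general (k m : ℕ) (n : ℕ) (hn : n = m * k) :
    ∑ π ∈ MP n k 1, ((Equiv.Perm.sign π : ℤ) : ℚ[X]) * X ^ exc π = (1 - X) ^ (n - k) := by
  subst hn
  rw [← det_modExcMatrix_eq_sum, det_modExcMatrix_mul, Nat.sub_one_mul]

theorem stmt1 (k m : ℕ) (hk : 0 < k) (hm : 0 < m) (n : ℕ) (hn : n = m * k) :
    ∑ π ∈ MP n k 1, ((Equiv.Perm.sign π : ℤ) : ℚ[X]) * X ^ exc π = (1 - X) ^ (n - k) :=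
  stmt1_general k m n hn
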